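/- Let (a_n)_{n≥0} be a sequence of nonnegative reals and γ > 0 such that a_n − a_{n+1} ≥ γ·a_n² for all n ≥ 0. Then for all n ≥ 1, a_n ≤ 1/(γ·n). -/

import Mathlib

/-! Each step of the recursion raises the reciprocal by at least `γ`:
`1/a (n+1) - 1/a n = (a n - a (n+1)) / (a n a (n+1)) ≥ γ a n / a (n+1) ≥ γ`.
Summing, `1/a n ≥ 1/a 0 + γ n ≥ γ n` as long as `a n > 0`. -/

theorem inv_add_le_inv_of_mul_sq_le_sub {x y γ : ℝ} (hγ : 0 ≤ γ) (hy : 0 < y)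
    (h : γ * x ^ 2 ≤ x - y) : x⁻¹ + γ ≤ y⁻¹ := by
  have hyx : y ≤ x := by nlinarith [sq_nonneg x]
  have hx : 0 < x := hy.trans_le hyx
  have hprod : γ * (x * y) ≤ x - y := by
    nlinarith [mul_le_mul_of_nonneg_left hyx (mul_nonneg hγ hx.le)]
  have hdiff : y⁻¹ - x⁻¹ = (x - y) / (x * y) := by field_simp
  have : γ ≤ y⁻¹ - x⁻¹ := by rwa [hdiff, le_div_iff₀ (by positivity)]
  linarith

section

variable {a : ℕ → ℝ} {γ : ℝ}

theorem antitone_of_mul_sq_le_sub (hγ : 0 ≤ γ) (hrec : ∀ n, γ * a n ^ 2 ≤ a n - a (n + 1)) :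
    Antitone a :=
  antitone_nat_of_succ_le fun n => by nlinarith [hrec n, sq_nonneg (a n)]

theorem inv_add_mul_le_inv_of_mul_sq_le_sub (hγ : 0 ≤ γ)
    (hrec : ∀ n, γ * a n ^ 2 ≤ a n - a (n + 1)) :
    ∀ n, 0 < a n → (a 0)⁻¹ + γ * n ≤ (a n)⁻¹
  | 0, _ => by simp
  | n + 1, hpos => by
    have hn : 0 < a n := hpos.trans_le (antitone_of_mul_sq_le_sub hγ hrec n.le_succ)
    have ih := inv_add_mul_le_inv_of_mul_sq_le_sub hγ hrec n hn
    have hstep := inv_add_le_inv_of_mul_sq_le_sub hγ hpos (hrec n)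
    push_cast
    linarith

end

theorem stmt_0_general (a : ℕ → ℝ) (γ : ℝ) (hγ : 0 < γ)
    (hrec : ∀ n, γ * (a n) ^ 2 ≤ a n - a (n + 1)) :
    ∀ n : ℕ, 1 ≤ n → a n ≤ 1 / (γ * n) := by
  intro n hn
  have hγn : 0 < γ * n := by positivity
  rcases le_or_gt (a n) 0 with hneg | hpos
  · exact hneg.trans (by positivity)
  have ha0 : 0 < a 0 := hpos.trans_le (antitone_of_mul_sq_le_sub hγ.le hrec n.zero_le)
  have hinv := inv_add_mul_le_inv_of_mul_sq_le_sub hγ.le hrec n hpos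
  rw [one_div, le_inv_comm₀ hpos hγn]
  linarith [inv_pos.mpr ha0]

/-- If a nonnegative real sequence satisfies `a n - a (n+1) ≥ γ * (a n)^2`,
then `a n ≤ 1/(γ n)` for all `n ≥ 1`. -/
theorem stmt_0 (a : ℕ → ℝ) (γ : ℝ) (hγ : 0 < γ)
    (ha : ∀ n, 0 ≤ a n)
    (hrec : ∀ n, γ * (a n) ^ 2 ≤ a n - a (n + 1)) :
    ∀ n : ℕ, 1 ≤ n → a n ≤ 1 / (γ * n) :=
  stmt_0_general a γ hγ hrec
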